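/- In the evaluation tree ET_M(t), for every node (s,p): W(s,p) = {p.L(s)} ∪ ⋃_{n ∈ suc(s,p)} W(n), where suc(s,p) is the set of successor nodes. -/

import Mathlib

/-- A position is a finite list of positive natural numbers. -/
abbrev Pos : Type := List ℕ+

/-- `below p q` (written `p ≤ q` in the paper) holds iff `q` is a prefix of `p`. -/
def below (p q : Pos) : Prop := ∃ q'' : Pos, p = q ++ q''

/-- Terms over a signature `F`, with a single variable `ω` (patterns are linear). -/
inductive Tm (F : Type) : Type
  | var : Tm F
  | app : F → List (Tm F) → Tm F

variable {F : Type}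

/-- Head symbol of a term (none for the variable). -/
def hd : Tm F → Option F
  | .var => none
  | .app f _ => some f

/-- The subterm of `t` at position `p`, if `p` is in the domain of `t`. -/
def subtermAt : Tm F → Pos → Option (Tm F)
  | t, [] => some t
  | .var, _ :: _ => none
  | .app _ ts, i :: p => (ts[(i : ℕ) - 1]?).bind (fun u => subtermAt u p)

/-- The domain (set of positions) of a term. -/
def Dom (t : Tm F) : Set Pos := {p | (subtermAt t p).isSome}

/-- `t` is a closed term: it contains no variable. -/
def Closed (t : Tm F) : Prop := ∀ p u, subtermAt t p = some u → u ≠ Tm.var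

/-- Terms that respect the arity function of the signature. -/
inductive WF (ar : F → ℕ) : Tm F → Prop
  | var : WF ar Tm.var
  | app : ∀ f ts, ts.length = ar f → (∀ u ∈ ts, WF ar u) → WF ar (Tm.app f ts)

/-- Pattern `ℓ` matches term `t` at position `p`: for every non-variable
position `p'` of `ℓ`, the head symbols of `t[p.p']` and `ℓ[p']` agree. -/
def Matches (ℓ t : Tm F) (p : Pos) : Prop :=
  ∀ p' u, subtermAt ℓ p' = some u → u ≠ Tm.var →
    ∃ v, subtermAt t (p ++ p') = some v ∧ hd v = hd u

/-- A match obligation: a set of (subpattern, position) pairs. -/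
abbrev Obl (F : Type) := Set (Tm F × Pos)
/-- A match goal: a match obligation together with a match announcement. -/
abbrev Goal (F : Type) := Obl F × (Tm F × Pos)
/-- A state of the set automaton: a set of match goals. -/
abbrev St (F : Type) := Set (Goal F)

/-- The positions of a match obligation. -/
def posOf (mo : Obl F) : Set Pos := {p | ∃ u, (u, p) ∈ mo}

/-- All match obligation positions of a state. -/
def posMO (s : St F) : Set Pos := {p | ∃ g ∈ s, p ∈ posOf g.1}

/-- Reduction of a match obligation after observing a symbol of arity `n`
at position `p`: pairs at other positions are kept, and the pair at `p` is
replaced by obligations for its non-variable arguments. -/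
def reduce (mo : Obl F) (n : ℕ) (p : Pos) : Obl F :=
  {x | x ∈ mo ∧ x.2 ≠ p} ∪
  {x | ∃ (ℓ u : Tm F) (i : ℕ+), (ℓ, p) ∈ mo ∧ (i : ℕ) ≤ n ∧
        subtermAt ℓ [i] = some u ∧ u ≠ Tm.var ∧ x = (u, p ++ [i])}

/-- The `f`-derivative of state `s` labelled with position `lab`:
unchanged goals, reduced goals and fresh goals. -/
def derivS (pats : Set (Tm F)) (ar : F → ℕ) (s : St F) (lab : Pos) (f : F) : St F :=
  {g | g ∈ s ∧ lab ∉ posOf g.1} ∪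
  {g | ∃ mo ma, (mo, ma) ∈ s ∧ (∃ ℓ, (ℓ, lab) ∈ mo ∧ hd ℓ = some f) ∧
        reduce mo (ar f) lab ≠ ∅ ∧ g = (reduce mo (ar f) lab, ma)} ∪
  {g | ∃ (ℓ : Tm F) (i : ℕ+), ℓ ∈ pats ∧ (i : ℕ) ≤ ar f ∧
        g = ({(ℓ, lab ++ [i])}, (ℓ, lab ++ [i]))}

/-- The direct dependency relation: the obligation position sets intersect. -/
def dirDep (g₁ g₂ : Goal F) : Prop := (posOf g₁.1 ∩ posOf g₂.1).Nonempty

/-- `K` is an equivalence class of `X` under the transitive closure of the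
direct dependency relation restricted to `X`. -/
def IsClass (X K : St F) : Prop :=
  ∃ g ∈ X, K = {g' | g' ∈ X ∧
    Relation.ReflTransGen (fun a b => a ∈ X ∧ b ∈ X ∧ dirDep a b) g g'}

/-- The match announcement positions of a set of goals. -/
def posMA (K : St F) : Set Pos := {p | ∃ mo ℓ, (mo, (ℓ, p)) ∈ K}

/-- `g` is the greatest common prefix (join) of the set of positions `P`. -/
def IsGcp (P : Set Pos) (g : Pos) : Prop :=
  (∀ p ∈ P, below p g) ∧ ∀ r : Pos, (∀ p ∈ P, below p r) → below g r

/-- Lift a match goal by stripping the common prefix `g` from all positions. -/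
def liftGoal (g : Pos) (x : Goal F) : Goal F :=
  ((fun y : Tm F × Pos => (y.1, y.2.drop g.length)) '' x.1,
   (x.2.1, x.2.2.drop g.length))

/-- Lift a set of match goals. -/
def liftSt (g : Pos) (K : St F) : St F := liftGoal g '' K

/-- The transition function of the set automaton: `(s', p') ∈ delta pats ar L s f`
iff `s'` is the lifting of a dependency class `K` of the derivative and `p'` is
the greatest common prefix of the announcement positions of `K`. -/
def delta (pats : Set (Tm F)) (ar : F → ℕ) (L : St F → Pos) (s : St F) (f : F) :
    Set (St F × Pos) :=
  {x | ∃ K, IsClass (derivS pats ar s (L s) f) K ∧ IsGcp (posMA K) x.2 ∧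
        x.1 = liftSt x.2 K}

/-- The initial state: all fresh root goals. -/
def initSt (pats : Set (Tm F)) : St F :=
  {g | ∃ ℓ ∈ pats, g = ({(ℓ, ([] : Pos))}, (ℓ, ([] : Pos)))}

/-- Reachable states of the set automaton. -/
inductive Reachable (pats : Set (Tm F)) (ar : F → ℕ) (L : St F → Pos) : St F → Prop
  | init : Reachable pats ar L (initSt pats)
  | step : ∀ s f s' p, Reachable pats ar L s →
      (s', p) ∈ delta pats ar L s f → Reachable pats ar L s'

/-- The labelling function `L` picks, for every reachable state, an obligation
position of one of its root goals. -/
def RootLabel (pats : Set (Tm F)) (ar : F → ℕ) (L : St F → Pos) : Prop :=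
  ∀ s, Reachable pats ar L s →
    ∃ mo ℓ, (mo, (ℓ, ([] : Pos))) ∈ s ∧ L s ∈ posOf mo

/-- The nodes of the evaluation tree `ET_M(t)`. -/
inductive Node (pats : Set (Tm F)) (ar : F → ℕ) (L : St F → Pos) (t : Tm F) :
    St F → Pos → Prop
  | root : Node pats ar L t (initSt pats) []
  | step : ∀ s p f s' p', Node pats ar L t s p →
      (∃ v, subtermAt t (p ++ L s) = some v ∧ hd v = some f) →
      (s', p') ∈ delta pats ar L s f →
      Node pats ar L t s' (p ++ p')

/-- The edges of the evaluation tree `ET_M(t)`. -/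
def EdgeRel (pats : Set (Tm F)) (ar : F → ℕ) (L : St F → Pos) (t : Tm F)
    (s : St F) (p : Pos) (s' : St F) (q : Pos) : Prop :=
  Node pats ar L t s p ∧ ∃ f p',
    (∃ v, subtermAt t (p ++ L s) = some v ∧ hd v = some f) ∧
    (s', p') ∈ delta pats ar L s f ∧ q = p ++ p'

/-- The work set `W(s,p)`: the positions of `t` below the position pointer that
still have to be inspected. -/
def Work (t : Tm F) (s : St F) (p : Pos) : Set Pos :=
  {x | ∃ q, x = p ++ q ∧ x ∈ Dom t ∧ ∃ r ∈ posMO s, below q r}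

/-- The output function: match announcements whose obligation is completed by
observing `f` at the label position. -/
def outS (ar : F → ℕ) (L : St F → Pos) (s : St F) (f : F) : Set (Tm F × Pos) :=
  {ma | ({(Tm.app f (List.replicate (ar f) Tm.var), L s)}, ma) ∈ s}


/-
W(s,p) consists of the positions of t that extend, relative to p, an obligation position of s.
Two invariants of reachable states drive the argument: the announcement position of a goal is a
prefix of its obligation positions, and every obligation position r carries the fresh goal
({(ℓ,r)}, (ℓ,r)) for some pattern ℓ. After f is observed at L(s), a position strictly below L(s)
lies below some L(s).i, which carries a fresh goal of the derivative; a position below another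
obligation position r lies below r, whose fresh goal survives the derivative since it does not
mention L(s). Each such goal lies in some dependency class, and the lifted class is a successor
whose work set contains the position. Conversely, by the first invariant the gcp of a class is a
prefix of all its obligation positions, so lifting loses nothing: an obligation position of a
successor is, once re-prefixed, one of the derivative, i.e. an old one or some L(s).i.
-/

theorem below_iff_isPrefix {p q : Pos} : below p q ↔ q <+: p :=
  ⟨fun ⟨r, h⟩ => ⟨r, h.symm⟩, fun ⟨r, h⟩ => ⟨r, h.symm⟩⟩

theorem exists_isGcp {P : Set Pos} (hP : P.Nonempty) : ∃ g, IsGcp P g := by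
  obtain ⟨p₀, hp₀⟩ := hP
  -- the gcp is a common prefix of maximal length
  set S : Set ℕ := {n | ∃ g : Pos, g.length = n ∧ ∀ p ∈ P, g <+: p}
  have hbdd : BddAbove S :=
    ⟨p₀.length, by rintro n ⟨g, rfl, hg⟩; exact (hg p₀ hp₀).length_le⟩
  have h0 : 0 ∈ S := ⟨[], rfl, fun p _ => List.nil_prefix⟩
  obtain ⟨g, hglen, hg⟩ := Nat.sSup_mem ⟨0, h0⟩ hbdd
  refine ⟨g, fun p hp => below_iff_isPrefix.mpr (hg p hp), fun r hr => ?_⟩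
  have hr' : ∀ p ∈ P, r <+: p := fun p hp => below_iff_isPrefix.mp (hr p hp)
  have hlen : r.length ≤ g.length := hglen ▸ le_csSup hbdd ⟨r, rfl, hr'⟩
  rw [below_iff_isPrefix]
  rcases List.prefix_or_prefix_of_prefix (hr' p₀ hp₀) (hg p₀ hp₀) with h | h
  · exact h
  · rw [h.eq_of_length_le hlen]

theorem subtermAt_append (t : Tm F) (p q : Pos) :
    subtermAt t (p ++ q) = (subtermAt t p).bind (fun u => subtermAt u q) := by
  induction p generalizing t with
  | nil => simp [subtermAt]
  | cons i p ih =>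
    cases t with
    | var => simp [subtermAt]
    | app f ts =>
      simp only [List.cons_append, subtermAt]
      cases ts[(i : ℕ) - 1]? with
      | none => simp
      | some u => simp [ih]

theorem Closed.exists_app {t : Tm F} (hc : Closed t) {p : Pos} {v : Tm F}
    (h : subtermAt t p = some v) : ∃ f ts, v = Tm.app f ts := by
  cases v with
  | var => exact absurd rfl (hc p _ h)
  | app f ts => exact ⟨f, ts, rfl⟩

theorem WF.subterm {ar : F → ℕ} : ∀ {p : Pos} {t v : Tm F}, WF ar t →
    subtermAt t p = some v → WF ar v
  | [], t, v, hw, h => by simp only [subtermAt, Option.some.injEq] at h; exact h ▸ hw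
  | _ :: _, .var, _, _, h => by simp [subtermAt] at h
  | _ :: _, .app _ _, _, .app _ _ _ hargs, h => by
    simp only [subtermAt, Option.bind_eq_some_iff] at h
    obtain ⟨u, hu, hsub⟩ := h
    exact (hargs u (List.mem_of_getElem? hu)).subterm hsub

theorem WF.length_args {ar : F → ℕ} {t : Tm F} {p : Pos} {f : F} {ts : List (Tm F)}
    (hw : WF ar t) (h : subtermAt t p = some (Tm.app f ts)) : ts.length = ar f := by
  cases hw.subterm h with
  | app _ _ hlen _ => exact hlen

theorem append_singleton_mem_dom {t : Tm F} {p : Pos} {f : F} {ts : List (Tm F)} {i : ℕ+}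
    (h : subtermAt t p = some (Tm.app f ts)) (hi : (i : ℕ) ≤ ts.length) : p ++ [i] ∈ Dom t := by
  have hi' : (i : ℕ) - 1 < ts.length := by have := i.pos; omega
  simp [Dom, subtermAt_append, h, subtermAt, List.getElem?_eq_getElem hi']

theorem le_length_of_append_cons_mem_dom {t : Tm F} {p q : Pos} {f : F} {ts : List (Tm F)}
    {i : ℕ+} (h : subtermAt t p = some (Tm.app f ts)) (hq : p ++ i :: q ∈ Dom t) :
    (i : ℕ) ≤ ts.length := by
  simp only [Dom, Set.mem_ofPred_eq, subtermAt_append, h, Option.bind_some, subtermAt] at hq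
  have hi : (i : ℕ) - 1 < ts.length := by
    by_contra hge
    rw [List.getElem?_eq_none (by omega)] at hq
    simp at hq
  have := i.pos
  omega

theorem posOf_singleton (ℓ : Tm F) (r : Pos) : posOf ({(ℓ, r)} : Obl F) = {r} := by
  ext q; simp [posOf]

theorem posMO_mono : Monotone (posMO (F := F)) := by
  rintro s s' h r ⟨g, hg, hr⟩
  exact ⟨g, h hg, hr⟩

section SetAutomaton

variable {pats : Set (Tm F)} {ar : F → ℕ} {L : St F → Pos} {t : Tm F}

theorem posMO_derivS {s : St F} {lab r : Pos} {f : F}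
    (h : r ∈ posMO (derivS pats ar s lab f)) :
    (r ∈ posMO s ∧ r ≠ lab) ∨ ∃ i : ℕ+, (i : ℕ) ≤ ar f ∧ r = lab ++ [i] := by
  obtain ⟨⟨mo, ma⟩, hg, u, hu⟩ := h
  rcases hg with (⟨hg, hlab⟩ | ⟨mo₀, ma₀, hs, -, -, heq⟩) | ⟨ℓ, i, -, hi, heq⟩
  · exact Or.inl ⟨⟨_, hg, u, hu⟩, by rintro rfl; exact hlab ⟨u, hu⟩⟩
  · obtain ⟨rfl, -⟩ := Prod.mk.inj heq
    rcases hu with ⟨hu, hne⟩ | ⟨_, _, i, _, hi, _, _, heq'⟩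
    · exact Or.inl ⟨⟨_, hs, u, hu⟩, hne⟩
    · exact Or.inr ⟨i, hi, (Prod.mk.inj heq').2⟩
  · obtain ⟨rfl, -⟩ := Prod.mk.inj heq
    simp only [Set.mem_singleton_iff, Prod.mk.injEq] at hu
    exact Or.inr ⟨i, hi, hu.2⟩

theorem IsClass.subset {X K : St F} (h : IsClass X K) : K ⊆ X := by
  obtain ⟨g, -, rfl⟩ := h
  exact fun _ hg' => hg'.1

theorem IsClass.mem_of_dirDep {X K : St F} (hK : IsClass X K) {g g' : Goal F}
    (hg : g ∈ K) (hg' : g' ∈ X) (hd : dirDep g g') : g' ∈ K := by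
  obtain ⟨g₀, -, rfl⟩ := hK
  exact ⟨hg', hg.2.tail ⟨hg.1, hg', hd⟩⟩

theorem exists_isClass_mem {X : St F} {g : Goal F} (hg : g ∈ X) : ∃ K, IsClass X K ∧ g ∈ K :=
  ⟨_, ⟨g, hg, rfl⟩, hg, Relation.ReflTransGen.refl⟩

theorem mem_posMO_liftSt {K : St F} {g r : Pos} :
    r ∈ posMO (liftSt g K) ↔ ∃ r₀ ∈ posMO K, r = r₀.drop g.length := by
  constructor
  · rintro ⟨-, ⟨γ, hγ, rfl⟩, u, ⟨⟨u₀, r₀⟩, hr₀, heq⟩⟩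
    exact ⟨r₀, ⟨γ, hγ, u₀, hr₀⟩, (Prod.mk.inj heq).2.symm⟩
  · rintro ⟨r₀, ⟨γ, hγ, u, hu⟩, rfl⟩
    exact ⟨liftGoal g γ, ⟨γ, hγ, rfl⟩, u, ⟨(u, r₀), hu, rfl⟩⟩

theorem mem_delta_iff {s s' : St F} {f : F} {p' : Pos} :
    (s', p') ∈ delta pats ar L s f ↔
      ∃ K, IsClass (derivS pats ar s (L s) f) K ∧ IsGcp (posMA K) p' ∧ s' = liftSt p' K :=
  Iff.rfl

def AnnouncementPrefix (s : St F) : Prop :=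
  ∀ mo ℓ pa, (mo, (ℓ, pa)) ∈ s → ∀ u r, (u, r) ∈ mo → pa <+: r

def FreshGoalAtObligations (s : St F) : Prop :=
  ∀ r ∈ posMO s, ∃ ℓ : Tm F, (({(ℓ, r)} : Obl F), (ℓ, r)) ∈ s

theorem AnnouncementPrefix.deriv {s : St F} {lab : Pos} {f : F} (h : AnnouncementPrefix s) :
    AnnouncementPrefix (derivS pats ar s lab f) := by
  rintro mo ℓ pa hg u r hr
  rcases hg with (⟨hg, -⟩ | ⟨mo₀, ma₀, hs, -, -, heq⟩) | ⟨ℓ₀, i, -, -, heq⟩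
  · exact h mo ℓ pa hg u r hr
  · simp only [Prod.mk.injEq] at heq
    obtain ⟨rfl, rfl, rfl⟩ := heq
    rcases hr with ⟨hr, -⟩ | ⟨ℓ', _, i, hmem, _, _, _, heq'⟩
    · exact h _ ℓ pa hs u r hr
    · obtain ⟨-, rfl⟩ := Prod.mk.inj heq'
      exact (h _ ℓ pa hs ℓ' lab hmem).trans ⟨[i], rfl⟩
  · simp only [Prod.mk.injEq] at heq
    obtain ⟨rfl, -, rfl⟩ := heq
    simp only [Set.mem_singleton_iff, Prod.mk.injEq] at hr
    exact hr.2 ▸ List.prefix_refl _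

theorem AnnouncementPrefix.isGcp_prefix {X K : St F} {g : Pos} (hX : AnnouncementPrefix X)
    (hK : IsClass X K) (hg : IsGcp (posMA K) g) {r : Pos} (hr : r ∈ posMO K) : g <+: r := by
  obtain ⟨⟨mo, ℓ, pa⟩, hγ, u, hu⟩ := hr
  exact (below_iff_isPrefix.mp (hg.1 pa ⟨mo, ℓ, hγ⟩)).trans (hX mo ℓ pa (hK.subset hγ) u r hu)

theorem AnnouncementPrefix.lift {X K : St F} {g : Pos} (hX : AnnouncementPrefix X)
    (hK : K ⊆ X) : AnnouncementPrefix (liftSt g K) := by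
  rintro mo ℓ pa ⟨⟨mo₀, ℓ₀, pa₀⟩, hγ, heq⟩ u r hr
  simp only [liftGoal, Prod.mk.injEq] at heq
  obtain ⟨rfl, -, rfl⟩ := heq
  obtain ⟨⟨u₀, r₀⟩, hr₀, heq'⟩ := hr
  obtain ⟨-, rfl⟩ := Prod.mk.inj heq'
  exact (hX mo₀ ℓ₀ pa₀ (hK hγ) u₀ r₀ hr₀).drop _

theorem AnnouncementPrefix.append_mem_posMO_derivS {s s' : St F} {f : F} {p' r : Pos}
    (hs : AnnouncementPrefix s) (hδ : (s', p') ∈ delta pats ar L s f) (hr : r ∈ posMO s') :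
    p' ++ r ∈ posMO (derivS pats ar s (L s) f) := by
  obtain ⟨K, hK, hg, rfl⟩ := mem_delta_iff.mp hδ
  obtain ⟨r₀, hr₀, rfl⟩ := mem_posMO_liftSt.mp hr
  rw [List.prefix_iff_eq_append.mp (hs.deriv.isGcp_prefix hK hg hr₀)]
  exact posMO_mono hK.subset hr₀

theorem Reachable.announcementPrefix {s : St F} (h : Reachable pats ar L s) :
    AnnouncementPrefix s := by
  induction h with
  | init =>
    rintro mo ℓ pa ⟨ℓ', -, heq⟩ u r -
    obtain ⟨-, heq⟩ := Prod.mk.inj heq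
    exact (Prod.mk.inj heq).2 ▸ List.nil_prefix
  | step s f s' p _ hδ ih =>
    obtain ⟨K, hK, -, rfl⟩ := mem_delta_iff.mp hδ
    exact ih.deriv.lift hK.subset

theorem Reachable.freshGoalAtObligations {s : St F} (hpats : pats.Nonempty)
    (h : Reachable pats ar L s) : FreshGoalAtObligations s := by
  induction h with
  | init =>
    rintro r ⟨-, ⟨ℓ, hℓ, rfl⟩, u, hu⟩
    simp only [Set.mem_singleton_iff, Prod.mk.injEq] at hu
    exact ⟨ℓ, ℓ, hℓ, by rw [hu.2]⟩
  | step s f s' p _ hδ ih =>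
    obtain ⟨K, hK, -, rfl⟩ := mem_delta_iff.mp hδ
    intro r hr
    obtain ⟨r₀, ⟨γ, hγ, u, hu⟩, rfl⟩ := mem_posMO_liftSt.mp hr
    have hfresh : ∃ ℓ : Tm F, (({(ℓ, r₀)} : Obl F), (ℓ, r₀)) ∈ derivS pats ar s (L s) f := by
      rcases posMO_derivS (posMO_mono hK.subset ⟨γ, hγ, u, hu⟩) with ⟨hr₀, hne⟩ | ⟨i, hi, rfl⟩
      · obtain ⟨ℓ, hℓ⟩ := ih r₀ hr₀
        refine ⟨ℓ, Or.inl (Or.inl ⟨hℓ, ?_⟩)⟩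
        rw [posOf_singleton]
        exact fun h => hne (Set.mem_singleton_iff.mp h).symm
      · obtain ⟨ℓ, hℓ⟩ := hpats
        exact ⟨ℓ, Or.inr ⟨ℓ, i, hℓ, hi, rfl⟩⟩
    obtain ⟨ℓ, hfresh⟩ := hfresh
    -- the fresh goal at `r₀` shares the position `r₀` with `γ`, hence lies in its class
    have hK' : (({(ℓ, r₀)} : Obl F), (ℓ, r₀)) ∈ K :=
      hK.mem_of_dirDep hγ hfresh ⟨r₀, ⟨u, hu⟩, by rw [posOf_singleton]; rfl⟩
    exact ⟨ℓ, _, hK', by simp [liftGoal]⟩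

theorem RootLabel.pats_nonempty (hL : RootLabel pats ar L) : pats.Nonempty := by
  obtain ⟨-, -, ⟨ℓ, hℓ, -⟩, -⟩ := hL _ Reachable.init
  exact ⟨ℓ, hℓ⟩

theorem Node.reachable {s : St F} {p : Pos} (h : Node pats ar L t s p) :
    Reachable pats ar L s := by
  induction h with
  | root => exact Reachable.init
  | step s p f s' p' _ _ hδ ih => exact Reachable.step s f s' p' ih hδ

theorem Node.append_mem_dom (hc : Closed t) (hw : WF ar t) {s : St F} {p : Pos}
    (h : Node pats ar L t s p) {r : Pos} (hr : r ∈ posMO s) : p ++ r ∈ Dom t := by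
  induction h generalizing r with
  | root =>
    obtain ⟨-, ⟨ℓ, -, rfl⟩, u, hu⟩ := hr
    simp only [Set.mem_singleton_iff, Prod.mk.injEq] at hu
    obtain ⟨-, rfl⟩ := hu
    simp [Dom, subtermAt]
  | step s p f s' p' hn hv hδ ih =>
    rw [List.append_assoc]
    rcases posMO_derivS (hn.reachable.announcementPrefix.append_mem_posMO_derivS hδ hr) with
      ⟨hr', -⟩ | ⟨i, hi, hr'⟩
    · exact ih hr'
    · obtain ⟨v, hv, hf⟩ := hv
      obtain ⟨f', ts, rfl⟩ := hc.exists_app hv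
      cases hf
      rw [hr', ← List.append_assoc]
      exact append_singleton_mem_dom hv (hw.length_args hv ▸ hi)

theorem Node.exists_edge_work_of_fresh {s : St F} {p : Pos} (hnode : Node pats ar L t s p)
    {f : F} (hf : ∃ v, subtermAt t (p ++ L s) = some v ∧ hd v = some f) {ℓ : Tm F} {w q : Pos}
    (hfresh : (({(ℓ, w)} : Obl F), (ℓ, w)) ∈ derivS pats ar s (L s) f) (hwq : w <+: q)
    (hdom : p ++ q ∈ Dom t) :
    ∃ s' q', EdgeRel pats ar L t s p s' q' ∧ p ++ q ∈ Work t s' q' := by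
  obtain ⟨K, hK, hfK⟩ := exists_isClass_mem hfresh
  have hwMA : w ∈ posMA K := ⟨_, ℓ, hfK⟩
  obtain ⟨g, hg⟩ := exists_isGcp ⟨w, hwMA⟩
  have hgw : g <+: w := below_iff_isPrefix.mp (hg.1 w hwMA)
  refine ⟨liftSt g K, p ++ g, ⟨hnode, f, g, hf, ⟨K, hK, hg, rfl⟩, rfl⟩,
    q.drop g.length, ?_, hdom, w.drop g.length, ?_, ?_⟩
  · rw [List.append_assoc, List.prefix_iff_eq_append.mp (hgw.trans hwq)]
  · exact mem_posMO_liftSt.mpr ⟨w, ⟨_, hfK, ℓ, rfl⟩, rfl⟩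
  · exact below_iff_isPrefix.mpr (hwq.drop _)

theorem Node.work_subset (hw : WF ar t) (hpats : pats.Nonempty) {s : St F} {p : Pos}
    (hnode : Node pats ar L t s p) {f : F} {ts : List (Tm F)}
    (hv : subtermAt t (p ++ L s) = some (Tm.app f ts)) :
    Work t s p ⊆ {p ++ L s} ∪
      {x | ∃ s' q, EdgeRel pats ar L t s p s' q ∧ x ∈ Work t s' q} := by
  have hf : ∃ v, subtermAt t (p ++ L s) = some v ∧ hd v = some f := ⟨_, hv, rfl⟩
  rintro _ ⟨q, rfl, hdom, r, hr, hqr⟩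
  rw [below_iff_isPrefix] at hqr
  by_cases hLq : L s <+: q
  · obtain ⟨_ | ⟨i, rest⟩, rfl⟩ := hLq
    · exact Or.inl (List.append_nil _ ▸ rfl)
    have hi : (i : ℕ) ≤ ar f :=
      hw.length_args hv ▸ le_length_of_append_cons_mem_dom hv (List.append_assoc .. ▸ hdom)
    obtain ⟨ℓ, hℓ⟩ := hpats
    exact Or.inr (hnode.exists_edge_work_of_fresh hf (Or.inr ⟨ℓ, i, hℓ, hi, rfl⟩)
      ⟨rest, by simp⟩ hdom)
  · -- `r ≠ L s`, so the fresh goal at `r` does not mention `L s` and survives the derivative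
    obtain ⟨ℓ, hℓ⟩ := hnode.reachable.freshGoalAtObligations hpats r hr
    have hkept : L s ∉ posOf ({(ℓ, r)} : Obl F) := by
      rw [posOf_singleton, Set.mem_singleton_iff]
      rintro rfl
      exact hLq hqr
    exact Or.inr (hnode.exists_edge_work_of_fresh hf (Or.inl (Or.inl ⟨hℓ, hkept⟩)) hqr hdom)

theorem EdgeRel.work_subset {s s' : St F} {p q : Pos} (he : EdgeRel pats ar L t s p s' q)
    (hL : L s ∈ posMO s) : Work t s' q ⊆ Work t s p := by
  obtain ⟨hnode, f, p', -, hδ, rfl⟩ := he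
  rintro _ ⟨q', rfl, hdom, r', hr', hq'r'⟩
  have hr'q' : p' ++ r' <+: p' ++ q' :=
    (List.prefix_append_right_inj p').mpr (below_iff_isPrefix.mp hq'r')
  refine ⟨p' ++ q', List.append_assoc .., hdom, ?_⟩
  rcases posMO_derivS (hnode.reachable.announcementPrefix.append_mem_posMO_derivS hδ hr') with
    ⟨hr, -⟩ | ⟨i, -, hr⟩
  · exact ⟨_, hr, below_iff_isPrefix.mpr hr'q'⟩
  · exact ⟨L s, hL, below_iff_isPrefix.mpr ((List.prefix_append _ [i]).trans (hr ▸ hr'q'))⟩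

end SetAutomaton

theorem work_decomposition_general {F : Type} (pats : Set (Tm F))
    (ar : F → ℕ) (L : St F → Pos) (t : Tm F) (hc : Closed t) (hw : WF ar t)
    (hL : RootLabel pats ar L) :
    ∀ (s : St F) (p : Pos), Node pats ar L t s p →
      Work t s p = {p ++ L s} ∪
        {x | ∃ (s' : St F) (q : Pos), EdgeRel pats ar L t s p s' q ∧
          x ∈ Work t s' q} := by
  intro s p hnode
  obtain ⟨_, _, hroot, u, hu⟩ := hL s hnode.reachable
  have hLpos : L s ∈ posMO s := ⟨_, hroot, u, hu⟩
  have hdom : p ++ L s ∈ Dom t := hnode.append_mem_dom hc hw hLpos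
  obtain ⟨v, hv⟩ := Option.isSome_iff_exists.mp hdom
  obtain ⟨f, ts, rfl⟩ := hc.exists_app hv
  refine (hnode.work_subset hw hL.pats_nonempty hv).antisymm ?_
  rintro x (rfl | ⟨s', q, he, hx⟩)
  · exact ⟨L s, rfl, hdom, L s, hLpos, below_iff_isPrefix.mpr (List.prefix_refl _)⟩
  · exact he.work_subset hLpos hx

/-- In the evaluation tree of a closed term `t`, the work set of a node is the
inspected position together with the union of the work sets of its successors. -/
theorem work_decomposition {F : Type} (pats : Set (Tm F))
    (ar : F → ℕ) (L : St F → Pos) (t : Tm F) (hc : Closed t) (hw : WF ar t)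
    (hpats : pats.Nonempty) (hWF : ∀ ℓ ∈ pats, WF ar ℓ)
    (hpv : ∀ ℓ ∈ pats, ℓ ≠ Tm.var) (hL : RootLabel pats ar L) :
    ∀ (s : St F) (p : Pos), Node pats ar L t s p →
      Work t s p = {p ++ L s} ∪
        {x | ∃ (s' : St F) (q : Pos), EdgeRel pats ar L t s p s' q ∧
          x ∈ Work t s' q} :=
  work_decomposition_general pats ar L t hc hw hL
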